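/- arXiv:1409.1418 — 2 statements merged into one kernel-verified Lean document; each statement's English description precedes it below -/
import Mathlib

section
/- A homeomorphism f of a compact metric space M is countably-expansive if and only if it is measure-expansive. -/
/-!
If every `Γ_δ(x)` is countable, it is null for every non-atomic measure. Conversely, if for
each `n` some `Γ_{1/(n+1)}(xₙ)` is uncountable, then, being closed, it carries a non-atomic
probability measure `μₙ` (Borel isomorphism theorem); the mixture `∑ 2^{-(n+1)} μₙ` is then a
non-atomic probability measure giving positive mass to some `Γ_δ(x)` for every `δ > 0`.
-/

open Metric MeasureTheory Set
open scoped ENNReal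

variable {M : Type*}

/-- The dynamical ball of an iterated homeomorphism. -/
def Gamma [MetricSpace M] (f : M ≃ₜ M) (δ : ℝ) (x : M) : Set M :=
  {y | ∀ n : ℤ, dist ((f.toEquiv ^ n) x) ((f.toEquiv ^ n) y) ≤ δ}

namespace Homeomorph

variable {X : Type*} [TopologicalSpace X]

def toPerm : (X ≃ₜ X) →* Equiv.Perm X where
  toFun := Homeomorph.toEquiv
  map_one' := rfl
  map_mul' _ _ := rfl

theorem continuous_toEquiv_zpow (f : X ≃ₜ X) (n : ℤ) : Continuous ⇑(f.toEquiv ^ n) := by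
  rw [show f.toEquiv ^ n = (f ^ n).toEquiv from (map_zpow toPerm f n).symm]
  exact (f ^ n).continuous

end Homeomorph

section Gamma

variable [MetricSpace M]

theorem isClosed_Gamma (f : M ≃ₜ M) (δ : ℝ) (x : M) : IsClosed (Gamma f δ x) := by
  simp only [Gamma, ofPred_forall]
  exact isClosed_iInter fun n =>
    isClosed_le (continuous_const.dist (f.continuous_toEquiv_zpow n)) continuous_const

theorem Gamma_mono (f : M ≃ₜ M) {δ δ' : ℝ} (h : δ ≤ δ') (x : M) :
    Gamma f δ x ⊆ Gamma f δ' x :=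
  fun _ hy n => (hy n).trans h

end Gamma

namespace MeasureTheory.Measure

variable {α : Type*} [MeasurableSpace α]

noncomputable def dyadicMixture (μ : ℕ → Measure α) : Measure α :=
  Measure.sum fun n => (2⁻¹ : ℝ≥0∞) ^ (n + 1) • μ n

theorem le_dyadicMixture_apply (μ : ℕ → Measure α) (n : ℕ) (s : Set α) :
    (2⁻¹ : ℝ≥0∞) ^ (n + 1) * μ n s ≤ dyadicMixture μ s :=
  le_sum (fun n => (2⁻¹ : ℝ≥0∞) ^ (n + 1) • μ n) n s

instance isProbabilityMeasure_dyadicMixture (μ : ℕ → Measure α)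
    [∀ n, IsProbabilityMeasure (μ n)] : IsProbabilityMeasure (dyadicMixture μ) := by
  constructor
  rw [dyadicMixture, sum_apply _ MeasurableSet.univ]
  simp only [smul_apply, measure_univ, smul_eq_mul, mul_one, ENNReal.tsum_geometric_add_one,
    ENNReal.one_sub_inv_two, inv_inv]
  exact ENNReal.inv_mul_cancel two_ne_zero ENNReal.ofNat_ne_top

instance nullSingletonClass_dyadicMixture (μ : ℕ → Measure α)
    [∀ n, NullSingletonClass (μ n)] : NullSingletonClass (dyadicMixture μ) :=
  ⟨fun x => sum_apply_eq_zero.2 fun n => by simp⟩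

end MeasureTheory.Measure

/-- The measure is Lebesgue measure on `[0, 1]`, transported by a Borel isomorphism `[0, 1] ≃ s`. -/
theorem MeasurableSet.exists_nullSingletonClass_probabilityMeasure_eq_one
    {α : Type*} [MeasurableSpace α] [StandardBorelSpace α] {s : Set α}
    (hs : MeasurableSet s) (hunc : ¬ s.Countable) :
    ∃ μ : Measure α, IsProbabilityMeasure μ ∧ NullSingletonClass μ ∧ μ s = 1 := by
  have := hs.standardBorel
  have hI : ¬ Countable unitInterval := fun h => by
    simpa using (Set.countable_univ (α := unitInterval)).measure_zero volume
  let e := PolishSpace.measurableEquivOfNotCountable hI (countable_coe_iff.not.2 hunc)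
  have he : Measurable (Subtype.val ∘ e) := measurable_subtype_coe.comp e.measurable
  have hinj : Function.Injective (Subtype.val ∘ e) := Subtype.val_injective.comp e.injective
  refine ⟨volume.map (Subtype.val ∘ e), Measure.isProbabilityMeasure_map he.aemeasurable,
    ⟨fun x => ?_⟩, ?_⟩
  · rw [Measure.map_apply he (measurableSet_singleton x)]
    exact (Set.subsingleton_singleton.preimage hinj).measure_zero _
  · rw [Measure.map_apply he hs, Set.preimage_comp, Subtype.coe_preimage_self, preimage_univ,
      measure_univ]

theorem stmt0 [MetricSpace M] [CompactSpace M] [MeasurableSpace M] [BorelSpace M]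
    (f : M ≃ₜ M) :
    (∃ δ > (0:ℝ), ∀ x : M, (Gamma f δ x).Countable) ↔
    (∀ μ : Measure M, IsProbabilityMeasure μ → (∀ x : M, μ {x} = 0) →
      ∃ δ > (0:ℝ), ∀ x : M, μ (Gamma f δ x) = 0) := by
  constructor
  · rintro ⟨δ, hδ, hcount⟩ μ _ hμ
    have : NullSingletonClass μ := ⟨hμ⟩
    exact ⟨δ, hδ, fun x => (hcount x).measure_zero μ⟩
  · intro hexp
    by_contra! hunc
    choose x hx using fun n : ℕ => hunc (1 / (n + 1)) Nat.one_div_pos_of_nat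
    choose μ hprob hnull hfull using fun n => (isClosed_Gamma f _ (x n)).measurableSet
      |>.exists_nullSingletonClass_probabilityMeasure_eq_one (hx n)
    obtain ⟨δ, hδ, hzero⟩ :=
      hexp (Measure.dyadicMixture μ) inferInstance (fun y => measure_singleton y)
    obtain ⟨n, hn⟩ := exists_nat_one_div_lt hδ
    have hone : 1 ≤ μ n (Gamma f δ (x n)) := hfull n ▸ measure_mono (Gamma_mono f hn.le (x n))
    have : (2⁻¹ : ℝ≥0∞) ^ (n + 1) ≤ 0 := calc
      _ ≤ 2⁻¹ ^ (n + 1) * μ n (Gamma f δ (x n)) := le_mul_of_one_le_right' hone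
      _ ≤ Measure.dyadicMixture μ (Gamma f δ (x n)) := Measure.le_dyadicMixture_apply μ n _
      _ = 0 := hzero (x n)
    exact pow_ne_zero _ (by simp) (nonpos_iff_eq_zero.1 this)
end

section
/- Every uncountable compact metric space admits a non-atomic Borel probability measure. -/
/-!
A compact metric space is Polish, hence a standard Borel space. By the Borel isomorphism
theorem an uncountable standard Borel space is Borel isomorphic to `[0, 1]`, and transporting
Lebesgue measure along such an isomorphism gives a non-atomic probability measure.
-/

open MeasureTheory Set

instance MeasurableEquiv.nullSingletonClass_map {α β : Type*} [MeasurableSpace α]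
    [MeasurableSpace β] (e : α ≃ᵐ β) (μ : Measure α) [NullSingletonClass μ] :
    NullSingletonClass (μ.map e) where
  measure_singleton x := by
    have : e ⁻¹' {x} = {e.symm x} := by ext; simp [e.eq_symm_apply]
    rw [e.map_apply, this, measure_singleton]

theorem unitInterval.not_countable : ¬Countable unitInterval := by
  rw [countable_coe_iff, Cardinal.Real.Icc_countable_iff]
  norm_num

theorem exists_isProbabilityMeasure_nullSingletonClass_of_not_countable {α : Type*}
    [MeasurableSpace α] [StandardBorelSpace α] (h : ¬Countable α) :
    ∃ μ : Measure α, IsProbabilityMeasure μ ∧ NullSingletonClass μ := by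
  let e : unitInterval ≃ᵐ α :=
    PolishSpace.measurableEquivOfNotCountable unitInterval.not_countable h
  exact ⟨volume.map e, Measure.isProbabilityMeasure_map e.measurable.aemeasurable,
    inferInstance⟩

theorem stmt15 {M : Type*} [MetricSpace M] [CompactSpace M]
    [MeasurableSpace M] [BorelSpace M]
    (h : ¬(Set.univ : Set M).Countable) :
    ∃ μ : Measure M, IsProbabilityMeasure μ ∧ ∀ x : M, μ {x} = 0 := by
  obtain ⟨μ, hμ, _⟩ :=
    exists_isProbabilityMeasure_nullSingletonClass_of_not_countable (countable_univ_iff.not.mp h)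
  exact ⟨μ, hμ, measure_singleton⟩
end
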